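/- arXiv:2211.01775 — 2 statements merged into one kernel-verified Lean document; each statement's English description precedes it below -/
import Mathlib

section
/- Let (M, v) be a complete discretely valued field with v : M → ℤ ∪ {∞} the normalized (surjective) valuation, whose residue field has characteristic p > 0, and suppose 0 < v(p). Let n be an integer coprime to p with n > v(p). Then the valuation ring of v equals {x ∈ M : ∃ y ∈ M, 1 + p·xⁿ = yⁿ}, and the maximal ideal of the valuation ring equals {x ∈ M : ∃ y ∈ M, p + xⁿ = p·yⁿ} (equivalently, 1 + xⁿ/p = yⁿ). In particular, both sets are defined by parameter-free existential formulas in the language of rings. -/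
set_option synthInstance.maxHeartbeats 1000000
set_option maxHeartbeats 1000000
set_option linter.unusedVariables false

open Multiplicative WithZero Filter Topology


section Aux

variable {M : Type*} [Field M] [vM : Valued M (WithZero (Multiplicative ℤ))]

lemma aux_v_natCast_le_one (k : ℕ) : Valued.v ((k : M)) ≤ 1 := by
  induction k with
  | zero => simp
  | succ k ih =>
    push_cast
    exact le_trans (Valued.v.map_add _ _) (max_le ih (le_of_eq Valued.v.map_one))

lemma aux_hensel_pow [CompleteSpace M]
    (hnt : ∃ r : M, Valued.v r ≠ 0 ∧ Valued.v r ≠ 1)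
    (n : ℕ) (hn : 0 < n) (hnu : Valued.v ((n : ℕ) : M) = 1)
    (u : M) (hu : Valued.v (u - 1) < 1) : ∃ y : M, y ^ n = u := by
  letI hrk : Valuation.RankOne (vM.v) :=
    { hom' := (WithZeroMulInt.toNNReal (by norm_num : (2 : NNReal) ≠ 0)).comp
        MonoidWithZeroHom.ValueGroup₀.embedding
      strictMono' := (WithZeroMulInt.toNNReal_strictMono (e := 2) (by norm_num)).comp
        MonoidWithZeroHom.ValueGroup₀.embedding_strictMono
      exists_val_nontrivial := hnt }
  letI : NormedField M := Valued.toNormedField M (WithZero (Multiplicative ℤ))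
  have hle1 : ∀ x : M, ‖x‖ ≤ 1 ↔ Valued.v x ≤ 1 := fun x =>
    Valued.toNormedField.norm_le_one_iff
  have hlt1 : ∀ x : M, ‖x‖ < 1 ↔ Valued.v x < 1 := fun x =>
    Valued.toNormedField.norm_lt_one_iff
  have hge1 : ∀ x : M, 1 ≤ ‖x‖ ↔ 1 ≤ Valued.v x := fun x =>
    Valued.toNormedField.one_le_norm_iff
  set c := ‖u - 1‖ with hc_def
  have hc0 : 0 ≤ c := norm_nonneg _
  have hc1 : c < 1 := (hlt1 _).mpr hu
  have hnnorm : ‖((n : ℕ) : M)‖ = 1 :=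
    le_antisymm ((hle1 _).mpr hnu.le) ((hge1 _).mpr hnu.ge)
  set g : M → M := fun y => y - (y ^ n - u) / ((n : M) * y ^ (n - 1)) with hg_def
  have step : ∀ y : M, ∀ t : ℝ, ‖y - 1‖ ≤ c → ‖y ^ n - u‖ ≤ t → t ≤ c →
      ‖g y - 1‖ ≤ c ∧ ‖g y - y‖ ≤ t ∧ ‖(g y) ^ n - u‖ ≤ t ^ 2 := by
    intro y t hy1 hyt htc
    have ht0 : 0 ≤ t := le_trans (norm_nonneg _) hyt
    have hy1c : ‖y - 1‖ < 1 := lt_of_le_of_lt hy1 hc1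
    have hy_norm : ‖y‖ = 1 := by
      have h := IsUltrametricDist.norm_add_eq_max_of_norm_ne_norm
        (x := y - 1) (y := (1 : M)) (by rw [norm_one]; exact ne_of_lt hy1c)
      simpa [norm_one, max_eq_right hy1c.le] using h
    have hd_norm : ‖(n : M) * y ^ (n - 1)‖ = 1 := by
      rw [norm_mul, norm_pow, hy_norm, one_pow, mul_one]; exact hnnorm
    have hd0 : (n : M) * y ^ (n - 1) ≠ 0 := by
      intro h0; rw [h0, norm_zero] at hd_norm; norm_num at hd_norm
    set h : M := -((y ^ n - u) / ((n : M) * y ^ (n - 1))) with hh_def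
    have hh_norm : ‖h‖ ≤ t := by
      rw [hh_def, norm_neg, norm_div, hd_norm, div_one]; exact hyt
    have hgy : g y = y + h := by rw [hg_def, hh_def]; ring
    have hyO : Valued.v y ≤ 1 := (hle1 y).mp (le_of_eq hy_norm)
    have hhO : Valued.v h ≤ 1 := (hle1 h).mp (hh_norm.trans (htc.trans hc1.le))
    obtain ⟨k, hk⟩ := Polynomial.powAddExpansion
      (⟨y, (Valuation.mem_valuationSubring_iff _ _).mpr hyO⟩ : Valued.v.valuationSubring)
      ⟨h, (Valuation.mem_valuationSubring_iff _ _).mpr hhO⟩ n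
    have hkM : (y + h) ^ n = y ^ n + (n : M) * y ^ (n - 1) * h + (k : M) * h ^ 2 := by
      have h' := congrArg (fun z : Valued.v.valuationSubring => (z : M)) hk
      push_cast at h'
      exact h'
    have hknorm : ‖(k : M)‖ ≤ 1 := (hle1 _).mpr k.2
    have hdh : (n : M) * y ^ (n - 1) * h = u - y ^ n := by
      rw [hh_def, mul_neg, mul_div_cancel₀ _ hd0]; ring
    have key : (g y) ^ n - u = (k : M) * h ^ 2 := by
      rw [hgy, hkM, hdh]; ring
    refine ⟨?_, ?_, ?_⟩
    · have : g y - 1 = (y - 1) + h := by rw [hgy]; ring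
      rw [this]
      exact le_trans (IsUltrametricDist.norm_add_le_max _ _)
        (max_le hy1 (hh_norm.trans htc))
    · have : g y - y = h := by rw [hgy]; ring
      rw [this]; exact hh_norm
    · rw [key, norm_mul, norm_pow]
      calc ‖(k : M)‖ * ‖h‖ ^ 2 ≤ 1 * t ^ 2 := by gcongr
        _ = t ^ 2 := one_mul _
  set seq : ℕ → M := fun k => g^[k] 1 with hseq
  have hseq0 : seq 0 = 1 := rfl
  have hseq_succ : ∀ k, seq (k + 1) = g (seq k) := fun k =>
    Function.iterate_succ_apply' g k 1
  have inv : ∀ k, ‖seq k - 1‖ ≤ c ∧ ‖(seq k) ^ n - u‖ ≤ c ^ (k + 1) := by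
    intro k; induction k with
    | zero =>
      constructor
      · rw [hseq0]; simpa using hc0
      · rw [hseq0, one_pow, pow_one, norm_sub_rev]
    | succ k ih =>
      have hcle : c ^ (k + 1) ≤ c := pow_le_of_le_one hc0 hc1.le k.succ_ne_zero
      obtain ⟨h1, h2, h3⟩ := step (seq k) (c ^ (k + 1)) ih.1 ih.2 hcle
      refine ⟨by rw [hseq_succ]; exact h1, ?_⟩
      rw [hseq_succ]
      calc ‖(g (seq k)) ^ n - u‖ ≤ (c ^ (k + 1)) ^ 2 := h3
        _ = c ^ (2 * k + 2) := by ring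
        _ ≤ c ^ (k + 2) := pow_le_pow_of_le_one hc0 hc1.le (by omega)
  have hdist : ∀ k, dist (seq k) (seq (k + 1)) ≤ c * c ^ k := by
    intro k
    obtain ⟨h1, h2, h3⟩ := step (seq k) (c ^ (k + 1)) (inv k).1 (inv k).2
      (pow_le_of_le_one hc0 hc1.le k.succ_ne_zero)
    rw [dist_eq_norm, norm_sub_rev, hseq_succ]
    calc ‖g (seq k) - seq k‖ ≤ c ^ (k + 1) := h2
      _ = c * c ^ k := by ring
  have hcauchy : CauchySeq seq := cauchySeq_of_le_geometric c c hc1 hdist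
  obtain ⟨L, hL⟩ := cauchySeq_tendsto_of_complete hcauchy
  refine ⟨L, ?_⟩
  have h1 : Tendsto (fun k => (seq k) ^ n - u) atTop (𝓝 (L ^ n - u)) :=
    (hL.pow n).sub tendsto_const_nhds
  have h2 : Tendsto (fun k => (seq k) ^ n - u) atTop (𝓝 0) := by
    apply squeeze_zero_norm (fun k => (inv k).2)
    exact (tendsto_pow_atTop_nhds_zero_of_lt_one hc0 hc1).comp (tendsto_add_atTop_nat 1)
  exact sub_eq_zero.mp (tendsto_nhds_unique h1 h2)


lemma aux_no_pow (n : ℕ) (g : Multiplicative ℤ) (hg1 : -(n : ℤ) < toAdd g)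
    (hg2 : toAdd g < 0) (a b : Multiplicative ℤ) (h : a ^ n = g * b ^ n) : False := by
  have h' := congrArg toAdd h
  simp only [toAdd_pow, toAdd_mul, nsmul_eq_mul] at h'
  have hdvd : (n : ℤ) ∣ toAdd g := ⟨toAdd a - toAdd b, by rw [mul_sub]; linarith⟩
  have hle := Int.le_of_dvd (by omega : (0 : ℤ) < -toAdd g) (dvd_neg.mpr hdvd)
  omega

lemma aux_v_n_eq_one (p : ℕ) (hp : p.Prime)
    [CharP (IsLocalRing.ResidueField (Valued.v.valuationSubring : ValuationSubring M)) p]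
    (n : ℕ) (hn : n.Coprime p) : Valued.v ((n : ℕ) : M) = 1 := by
  refine le_antisymm (aux_v_natCast_le_one n) ?_
  by_contra hlt
  push_neg at hlt
  set O := (Valued.v.valuationSubring : ValuationSubring M) with hO
  have hmem : ((n : ℕ) : O) ∈ IsLocalRing.maximalIdeal O := by
    rw [IsLocalRing.mem_maximalIdeal, mem_nonunits_iff]
    intro hunit
    rcases hunit with ⟨w, hw⟩
    have h1 : ((w : O) : M) * (((w⁻¹ : Oˣ) : O) : M) = 1 := by
      rw [← Subring.coe_mul]
      norm_cast
      simp
    have h2 : Valued.v ((w : O) : M) * Valued.v (((w⁻¹ : Oˣ) : O) : M) = 1 := by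
      rw [← Valuation.map_mul, h1, Valuation.map_one]
    have h3 : Valued.v ((w : O) : M) ≤ 1 := (w : O).2
    have h4 : Valued.v (((w⁻¹ : Oˣ) : O) : M) ≤ 1 := ((w⁻¹ : Oˣ) : O).2
    have h5 : Valued.v ((w : O) : M) = 1 := by
      rcases lt_or_eq_of_le h3 with h | h
      · exfalso
        have := mul_lt_one_of_lt_of_le h h4
        rw [h2] at this; exact lt_irrefl _ this
      · exact h
    rw [hw] at h5
    have : Valued.v ((n : ℕ) : M) = 1 := by
      rw [← h5]; rfl
    rw [this] at hlt; exact lt_irrefl _ hlt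
  have hres : ((n : ℕ) : IsLocalRing.ResidueField O) = 0 := by
    have := (Ideal.Quotient.eq_zero_iff_mem).mpr hmem
    rw [← map_natCast (IsLocalRing.residue O) n]
    exact this
  have hdvd : p ∣ n := (CharP.cast_eq_zero_iff (IsLocalRing.ResidueField O) p n).mp hres
  exact (hp.coprime_iff_not_dvd.mp hn.symm) hdvd

end Aux

/-- in a complete discretely valued field `M` with normalized
(surjective) valuation, residue characteristic `p > 0`, if `n` is coprime to `p` and
`n > v(p) > 0` (in additive notation; multiplicatively `ofAdd (-n) < v p < 1`), then the
valuation ring is `{x | ∃ y, 1 + p·xⁿ = yⁿ}` and its maximal ideal is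
`{x | ∃ y, p + xⁿ = p·yⁿ}`, both parameter-free existentially defined sets. -/
theorem valuationSubring_eq_existential_set_of_complete_discrete
    (p : ℕ) (hp : p.Prime) (M : Type*) [Field M]
    [Valued M (WithZero (Multiplicative ℤ))] [CompleteSpace M]
    (hsurj : Function.Surjective (Valued.v : M → WithZero (Multiplicative ℤ)))
    [CharP (IsLocalRing.ResidueField (Valued.v.valuationSubring :
        ValuationSubring M)) p]
    (hvp : Valued.v (p : M) < 1)
    (n : ℕ) (hn : n.Coprime p)
    (hnp : (↑(Multiplicative.ofAdd (-(n : ℤ)) : Multiplicative ℤ) : WithZero (Multiplicative ℤ)) <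
      Valued.v (p : M)) :
    {x : M | Valued.v x ≤ 1} = {x : M | ∃ y : M, 1 + (p : M) * x ^ n = y ^ n} ∧
    {x : M | Valued.v x < 1} = {x : M | ∃ y : M, (p : M) + x ^ n = (p : M) * y ^ n} := by
  have hvp0 : Valued.v (p : M) ≠ 0 := (lt_trans (WithZero.zero_lt_coe _) hnp).ne'
  set g := WithZero.unzero hvp0 with hgdef
  have hvpg : Valued.v (p : M) = ↑g := (WithZero.coe_unzero hvp0).symm
  have hg2 : toAdd g < 0 := by
    have h := hvp
    rw [hvpg, ← WithZero.coe_one, WithZero.coe_lt_coe, ← Multiplicative.toAdd_lt,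
      toAdd_one] at h
    exact h
  have hg1 : -(n : ℤ) < toAdd g := by
    have h := hnp
    rw [hvpg, WithZero.coe_lt_coe, ← Multiplicative.toAdd_lt, toAdd_ofAdd] at h
    exact h
  have hnpos : 0 < n := by omega
  have hnu : Valued.v ((n : ℕ) : M) = 1 := aux_v_n_eq_one p hp n hn
  have hnt : ∃ r : M, Valued.v r ≠ 0 ∧ Valued.v r ≠ 1 := ⟨(p : M), hvp0, ne_of_lt hvp⟩
  have hp0 : (p : M) ≠ 0 := fun h => hvp0 (by rw [h, Valuation.map_zero])
  constructor
  · ext x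
    simp only [Set.mem_setOf_eq]
    constructor
    · intro hx
      have hu : Valued.v ((1 + (p : M) * x ^ n) - 1) < 1 := by
        rw [add_sub_cancel_left, Valuation.map_mul, Valuation.map_pow]
        calc Valued.v (p : M) * (Valued.v x) ^ n ≤ Valued.v (p : M) * 1 :=
              mul_le_mul_right (pow_le_one' hx n) _
          _ < 1 := by rw [mul_one]; exact hvp
      obtain ⟨y, hy⟩ := aux_hensel_pow hnt n hnpos hnu _ hu
      exact ⟨y, hy.symm⟩
    · rintro ⟨y, hy⟩
      by_contra hx
      push_neg at hx
      have hx0 : Valued.v x ≠ 0 := fun h => by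
        rw [h] at hx; exact absurd hx (not_lt_of_ge zero_le')
      set a := WithZero.unzero hx0 with hadef
      have hva : Valued.v x = ↑a := (WithZero.coe_unzero hx0).symm
      have hta : 0 < toAdd a := by
        have h := hx
        rw [hva, ← WithZero.coe_one, WithZero.coe_lt_coe, ← Multiplicative.toAdd_lt,
          toAdd_one] at h
        exact h
      have hvpx : Valued.v ((p : M) * x ^ n) = ↑(g * a ^ n) := by
        rw [Valuation.map_mul, Valuation.map_pow, hvpg, hva, ← WithZero.coe_pow,
          ← WithZero.coe_mul]
      have hgt : (1 : WithZero (Multiplicative ℤ)) < Valued.v ((p : M) * x ^ n) := by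
        rw [hvpx, ← WithZero.coe_one, WithZero.coe_lt_coe, ← Multiplicative.toAdd_lt,
          toAdd_one, toAdd_mul, toAdd_pow, nsmul_eq_mul]
        have : (n : ℤ) * 1 ≤ (n : ℤ) * toAdd a :=
          mul_le_mul_of_nonneg_left hta (by positivity)
        linarith
      have hvy : (Valued.v y) ^ n = ↑(g * a ^ n) := by
        rw [← Valuation.map_pow, ← hy,
          Valuation.map_add_eq_of_lt_right _ (by rw [Valuation.map_one]; exact hgt), hvpx]
      have hy0 : Valued.v y ≠ 0 := fun h0 => by
        rw [h0, zero_pow hnpos.ne'] at hvy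
        exact WithZero.zero_ne_coe hvy
      set b := WithZero.unzero hy0 with hbdef
      have hvb : Valued.v y = ↑b := (WithZero.coe_unzero hy0).symm
      apply aux_no_pow n g hg1 hg2 b a
      rw [hvb, ← WithZero.coe_pow] at hvy
      exact WithZero.coe_inj.mp hvy
  · ext x
    simp only [Set.mem_setOf_eq]
    constructor
    · intro hx
      by_cases hx0 : x = 0
      · exact ⟨1, by rw [hx0, zero_pow hnpos.ne', one_pow, add_zero, mul_one]⟩
      have hvx0 : Valued.v x ≠ 0 := fun h => hx0 ((Valuation.zero_iff _).mp h)
      set a := WithZero.unzero hvx0 with hadef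
      have hva : Valued.v x = ↑a := (WithZero.coe_unzero hvx0).symm
      have hta : toAdd a < 0 := by
        have h := hx
        rw [hva, ← WithZero.coe_one, WithZero.coe_lt_coe, ← Multiplicative.toAdd_lt,
          toAdd_one] at h
        exact h
      have hu : Valued.v ((1 + x ^ n * (p : M)⁻¹) - 1) < 1 := by
        rw [add_sub_cancel_left, Valuation.map_mul, Valuation.map_pow, map_inv₀,
          hva, hvpg, ← WithZero.coe_pow, ← WithZero.coe_inv, ← WithZero.coe_mul,
          ← WithZero.coe_one, WithZero.coe_lt_coe, ← Multiplicative.toAdd_lt,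
          toAdd_one, toAdd_mul, toAdd_pow, toAdd_inv, nsmul_eq_mul]
        have : (n : ℤ) * toAdd a ≤ (n : ℤ) * (-1) :=
          mul_le_mul_of_nonneg_left (by omega) (by positivity)
        linarith
      obtain ⟨y, hy⟩ := aux_hensel_pow hnt n hnpos hnu _ hu
      refine ⟨y, ?_⟩
      rw [hy]
      field_simp
    · rintro ⟨y, hy⟩
      by_contra hx
      push_neg at hx
      have hvx0 : Valued.v x ≠ 0 := fun h => by
        rw [h] at hx
        exact one_ne_zero (le_antisymm hx zero_le')
      have hx0 : x ≠ 0 := fun h => hvx0 (by rw [h, Valuation.map_zero])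
      set a := WithZero.unzero hvx0 with hadef
      have hva : Valued.v x = ↑a := (WithZero.coe_unzero hvx0).symm
      have hta : 0 ≤ toAdd a := by
        have h := hx
        rw [hva, ← WithZero.coe_one, WithZero.coe_le_coe] at h
        have := Multiplicative.toAdd_le.mpr h
        simpa using this
      have hlt : Valued.v (p : M) < Valued.v (x ^ n) := by
        rw [Valuation.map_pow, hvpg, hva, ← WithZero.coe_pow, WithZero.coe_lt_coe,
          ← Multiplicative.toAdd_lt, toAdd_pow, nsmul_eq_mul]
        have : (0 : ℤ) ≤ (n : ℤ) * toAdd a := by positivity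
        linarith
      have hvsum : Valued.v ((p : M) + x ^ n) = ↑(a ^ n) := by
        rw [Valuation.map_add_eq_of_lt_right _ hlt, Valuation.map_pow, hva,
          ← WithZero.coe_pow]
      have hy0 : Valued.v y ≠ 0 := by
        intro h0
        rw [hy, Valuation.map_mul, Valuation.map_pow, h0, zero_pow hnpos.ne',
          mul_zero] at hvsum
        exact WithZero.zero_ne_coe hvsum
      set b := WithZero.unzero hy0 with hbdef
      have hvb : Valued.v y = ↑b := (WithZero.coe_unzero hy0).symm
      apply aux_no_pow n g hg1 hg2 a b
      have : (↑(a ^ n) : WithZero (Multiplicative ℤ)) = ↑(g * b ^ n) := by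
        rw [← hvsum, hy, Valuation.map_mul, Valuation.map_pow, hvpg, hvb,
          ← WithZero.coe_pow, ← WithZero.coe_mul]
      exact WithZero.coe_inj.mp this
end

section
/- Let p be a prime and let (F, v) be a complete discretely valued field of characteristic 0 with residue field K of characteristic p and with p a uniformizer of v. Let a ∈ O_v be an element of the valuation ring whose residue ā ∈ K is such that the polynomial X² − X − ā is irreducible over K. Then: (i) v(1 + 4a) = 0, and the polynomial X² − p(1+4a) is irreducible over F; (ii) the quadratic extension E = F(√(p(1+4a))) is totally ramified over F, i.e., the unique prolongation of v to E has residue field equal to K and p has even value in the normalized value group of E; and (iii) the residue field of E(√p) (under the unique prolongation of v) is the quadratic extension K(α) of K, where α is a root of X² − X − ā. -/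
set_option synthInstance.maxHeartbeats 1000000
set_option maxHeartbeats 1000000

open Polynomial
open Polynomial

noncomputable section Helpers

abbrev Zm0 := WithZero (Multiplicative ℤ)

def ee (n : ℤ) : Zm0 := ((Multiplicative.ofAdd n : Multiplicative ℤ) : Zm0)

lemma ee_ne_zero (n : ℤ) : ee n ≠ 0 := WithZero.coe_ne_zero

lemma ee_mul (m n : ℤ) : ee m * ee n = ee (m + n) := by
  simp [ee, ← WithZero.coe_mul, ← ofAdd_add]

lemma ee_le_ee {m n : ℤ} : ee m ≤ ee n ↔ m ≤ n := by
  rw [ee, ee, WithZero.coe_le_coe]; exact Multiplicative.ofAdd_le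

lemma ee_lt_ee {m n : ℤ} : ee m < ee n ↔ m < n := by
  rw [ee, ee, WithZero.coe_lt_coe]; exact Multiplicative.ofAdd_lt

lemma ee_inj {m n : ℤ} : ee m = ee n ↔ m = n := by
  constructor
  · intro h; exact le_antisymm (ee_le_ee.1 h.le) (ee_le_ee.1 h.ge)
  · rintro rfl; rfl

lemma ee_zero : ee 0 = 1 := rfl

lemma ee_pow (n : ℕ) (m : ℤ) : ee m ^ n = ee (n * m) := by
  induction n with
  | zero => simp [ee_zero]
  | succ k ih => rw [pow_succ, ih, ee_mul, ee_inj]; push_cast; ring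

lemma ee_inv (n : ℤ) : (ee n)⁻¹ = ee (-n) := by
  simp [ee, ← WithZero.coe_inv, ← ofAdd_neg]

lemma ee_zpow (n : ℤ) (m : ℤ) : ee m ^ n = ee (n * m) := by
  induction n using Int.rec with
  | ofNat k => simpa using ee_pow k m
  | negSucc k =>
      rw [zpow_negSucc, ee_pow, ee_inv, ee_inj]
      push_cast [Int.negSucc_eq]; ring

lemma exists_ee {γ : Zm0} (h : γ ≠ 0) : ∃ m : ℤ, γ = ee m := by
  obtain ⟨g, rfl⟩ := WithZero.ne_zero_iff_exists.1 h
  exact ⟨Multiplicative.toAdd g, rfl⟩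

lemma ee_le_one {m : ℤ} : ee m ≤ 1 ↔ m ≤ 0 := by
  rw [← ee_zero, ee_le_ee]

lemma ee_lt_one {m : ℤ} : ee m < 1 ↔ m < 0 := by
  rw [← ee_zero, ee_lt_ee]

end Helpers


lemma val_natCast_le_one {R : Type*} [Ring R] (v : Valuation R Zm0) (n : ℕ) : v n ≤ 1 := by
  induction n with
  | zero => simp
  | succ k ih =>
      push_cast
      exact le_trans (v.map_add _ _) (max_le ih (le_of_eq v.map_one))

lemma isUnit_iff_val_eq_one {F : Type*} [Field F] (v : Valuation F Zm0)
    (z : v.valuationSubring) : IsUnit z ↔ v z.1 = 1 := by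
  constructor
  · rintro ⟨u, hu⟩
    have h1 : (u.val.1 : F) * (u.inv.1 : F) = 1 := by
      exact_mod_cast congrArg Subtype.val u.val_inv
    have hv := congrArg v h1
    rw [v.map_mul, v.map_one] at hv
    have hle : v u.val.1 ≤ 1 := u.val.2
    have hle' : v u.inv.1 ≤ 1 := u.inv.2
    have : v u.val.1 = 1 := le_antisymm hle (by
      calc (1:Zm0) = v u.val.1 * v u.inv.1 := hv.symm
        _ ≤ v u.val.1 * 1 := mul_le_mul' le_rfl hle'
        _ = v u.val.1 := mul_one _)
    rwa [← hu]
  · intro h1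
    have hz0 : z.1 ≠ 0 := by
      intro h; rw [h, v.map_zero] at h1; exact zero_ne_one h1
    have hinv : v z.1⁻¹ ≤ 1 := by
      rw [map_inv₀, h1]; simp
    refine IsUnit.of_mul_eq_one (a := z) ⟨z.1⁻¹, hinv⟩ ?_
    ext
    simp [mul_inv_cancel₀ hz0]

lemma residue_zero_iff {F : Type*} [Field F] (v : Valuation F Zm0)
    (z : v.valuationSubring) :
    IsLocalRing.residue _ z = 0 ↔ v z.1 < 1 := by
  rw [IsLocalRing.residue_eq_zero_iff, IsLocalRing.mem_maximalIdeal, mem_nonunits_iff,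
    isUnit_iff_val_eq_one]
  exact ⟨fun h => lt_of_le_of_ne z.2 h, fun h => ne_of_lt h⟩

section H3
variable {F : Type*} [Field F]

lemma isEquiv_lt_iff {v w₀ : Valuation F Zm0} (h : w₀.IsEquiv v) (r s : F) :
    w₀ r < w₀ s ↔ v r < v s := by
  rw [lt_iff_le_not_ge, lt_iff_le_not_ge, h r s, h s r]

lemma isEquiv_pow {v w₀ : Valuation F Zm0} (h : w₀.IsEquiv v) {π : F}
    (hπ : v π = ee (-1)) :
    ∃ k : ℤ, 1 ≤ k ∧ ∀ (x : F) (m : ℤ), v x = ee m → w₀ x = ee (k * m) := by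
  have hπ0 : π ≠ 0 := by
    intro hr; rw [hr, v.map_zero] at hπ; exact (ee_ne_zero _) hπ.symm
  have hne : w₀ π ≠ 0 := by
    intro h0
    have : w₀ π ≤ w₀ 0 := by rw [w₀.map_zero, h0]
    have := (h π 0).1 this
    rw [v.map_zero, le_zero_iff, hπ] at this
    exact ee_ne_zero _ this
  obtain ⟨m₀, hm₀⟩ := exists_ee hne
  have hm₀neg : m₀ < 0 := by
    have hlt : w₀ π < w₀ 1 := by
      rw [isEquiv_lt_iff h, v.map_one, hπ]
      exact ee_lt_one.2 (by omega)
    rw [w₀.map_one, hm₀, ee_lt_one] at hlt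
    exact hlt
  refine ⟨-m₀, by omega, ?_⟩
  intro x m hx
  have hx0 : x ≠ 0 := by
    intro hr; rw [hr, v.map_zero] at hx; exact (ee_ne_zero _) hx.symm
  have hvpow : v (π ^ (-m)) = ee m := by
    rw [map_zpow₀, hπ, ee_zpow]; ring_nf
  have h1 : w₀ x = w₀ (π ^ (-m)) := by
    apply le_antisymm
    · exact (h x (π ^ (-m))).2 (by rw [hx, hvpow])
    · exact (h (π ^ (-m)) x).2 (by rw [hx, hvpow])
  rw [h1, map_zpow₀, hm₀, ee_zpow]
  congr 1; ring

lemma isEquiv_le_one_iff {v w₀ : Valuation F Zm0} (h : w₀.IsEquiv v) (x : F) :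
    w₀ x ≤ 1 ↔ v x ≤ 1 := by
  have := h x 1; rwa [w₀.map_one, v.map_one] at this

lemma isEquiv_lt_one_iff {v w₀ : Valuation F Zm0} (h : w₀.IsEquiv v) (x : F) :
    w₀ x < 1 ↔ v x < 1 := by
  have := isEquiv_lt_iff h x 1; rwa [w₀.map_one, v.map_one] at this

lemma sq_le_sq_iff {a b : Zm0} : a ^ 2 ≤ b ^ 2 ↔ a ≤ b := by
  rcases eq_or_ne b 0 with rfl | hb
  · simp only [zero_pow (by norm_num : (2:ℕ) ≠ 0), le_zero_iff,
      pow_eq_zero_iff (by norm_num : (2:ℕ) ≠ 0)]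
  rcases eq_or_ne a 0 with rfl | ha
  · simp [zero_le']
  obtain ⟨m, rfl⟩ := exists_ee ha
  obtain ⟨n, rfl⟩ := exists_ee hb
  rw [ee_pow, ee_pow, ee_le_ee, ee_le_ee]
  omega

lemma val_add_parity {E : Type*} [Field E] (w : Valuation E Zm0) {j : ℤ}
    (hj : 1 ≤ j) {A B : E}
    (hA : A = 0 ∨ ∃ m, w A = ee (j * (2 * m))) (hB : B = 0 ∨ ∃ m, w B = ee (j * (2 * m + 1))) :
    w (A + B) = max (w A) (w B) := by
  rcases hA with rfl | ⟨m, hm⟩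
  · simp
  rcases hB with rfl | ⟨n, hn⟩
  · simp
  apply Valuation.map_add_of_distinct_val
  rw [hm, hn]
  simp only [ne_eq, ee_inj]
  intro hc
  have := mul_left_cancel₀ (by omega : j ≠ 0) hc
  omega

end H3

section H4
variable {F E : Type*} [Field F] [Field E] [Algebra F E] {e : E} {c : F}

lemma span_pair (hce : e ^ 2 = algebraMap F E c) (htop : Algebra.adjoin F {e} = ⊤) (z : E) :
    ∃ x y : F, z = algebraMap F E x + algebraMap F E y * e := by
  let S : Subalgebra F E :=
    { carrier := {z : E | ∃ x y : F, z = algebraMap F E x + algebraMap F E y * e}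
      add_mem' := by
        rintro u v ⟨x, y, rfl⟩ ⟨x', y', rfl⟩
        exact ⟨x + x', y + y', by rw [map_add, map_add]; ring⟩
      mul_mem' := by
        rintro u v ⟨x, y, rfl⟩ ⟨x', y', rfl⟩
        refine ⟨x * x' + c * (y * y'), x * y' + y * x', ?_⟩
        rw [map_add, map_mul, map_mul, map_add, map_mul, map_mul, map_mul]
        linear_combination (algebraMap F E y * algebraMap F E y') * hce
      algebraMap_mem' := fun r => ⟨r, 0, by simp⟩ }
  have he : e ∈ S := ⟨0, 1, by simp⟩
  have hle : Algebra.adjoin F {e} ≤ S := Algebra.adjoin_le (by simpa using he)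
  rw [htop] at hle
  exact hle (Algebra.mem_top)

lemma coords_unique (hns : ∀ q : F, q ^ 2 ≠ c) (hce : e ^ 2 = algebraMap F E c)
    {x y x' y' : F}
    (hxy : algebraMap F E x + algebraMap F E y * e = algebraMap F E x' + algebraMap F E y' * e) :
    x = x' ∧ y = y' := by
  have hinj := (algebraMap F E).injective
  by_cases hy : y = y'
  · subst hy
    refine ⟨hinj ?_, rfl⟩
    have := add_right_cancel hxy
    exact this
  · exfalso
    have hyne : algebraMap F E (y' - y) ≠ 0 := by
      simp only [ne_eq, _root_.map_eq_zero, sub_eq_zero]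
      exact fun hh => hy hh.symm
    have he' : e = algebraMap F E ((x - x') / (y' - y)) := by
      rw [map_div₀, eq_div_iff hyne, map_sub, map_sub]
      linear_combination -hxy
    apply hns ((x - x') / (y' - y))
    apply hinj
    rw [map_pow, ← he', hce]
end H4

section H5
lemma max_sq (a b : Zm0) : (max a b) ^ 2 = max (a ^ 2) (b ^ 2) := by
  rcases le_total a b with h | h
  · rw [max_eq_right h, max_eq_right (sq_le_sq_iff.2 h)]
  · rw [max_eq_left h, max_eq_left (sq_le_sq_iff.2 h)]

lemma mul_max₀ (a b c : Zm0) : a * max b c = max (a * b) (a * c) := by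
  rcases le_total b c with h | h
  · rw [max_eq_right h, max_eq_right (mul_le_mul' le_rfl h)]
  · rw [max_eq_left h, max_eq_left (mul_le_mul' le_rfl h)]
end H5


/-- let `(F, v)` be a complete discretely valued field of
characteristic `0`, with normalized valuation `v`, uniformizer `p` and residue field
`K` of characteristic `p`, and let `a` be an element of the valuation ring whose
residue `ā` makes `X² − X − ā` irreducible over `K`. Then:
(i) `v(1 + 4a) = 0` and `X² − p(1+4a)` is irreducible over `F`;
(ii) for the quadratic extension `E = F(√(p(1+4a)))`, every normalized prolongation of
`v` to `E` has trivial residue field extension (`E/F` is totally ramified) while `p`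
has even (i.e. square) value; moreover a prolongation exists;
(iii) the residue field of `E(√p)` under any prolongation of `v` is `K(α)` with `α` a
root of `X² − X − ā`: there is `β` in the valuation ring reducing to a root of
`X² − X − ā` such that every element of the valuation ring is congruent to an
`K`-linear combination `x₁ + x₂·β` modulo the maximal ideal. -/
theorem quadratic_ramified_extension_of_complete_dvf
    (p : ℕ) (hp : p.Prime)
    (F : Type*) [Field F] [CharZero F]
    [Valued F (WithZero (Multiplicative ℤ))] [CompleteSpace F]
    (hsurj : Function.Surjective (Valued.v : F → WithZero (Multiplicative ℤ)))
    (hunif : Valued.v (p : F) =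
      (↑(Multiplicative.ofAdd (-1 : ℤ) : Multiplicative ℤ) : WithZero (Multiplicative ℤ)))
    (a : F) (ha : a ∈ (Valued.v.valuationSubring : ValuationSubring F))
    (hirr : Irreducible (X ^ 2 - X - C
      (IsLocalRing.residue (Valued.v.valuationSubring : ValuationSubring F) ⟨a, ha⟩))) :
    -- (i)
    (Valued.v (1 + 4 * a) = 1 ∧
      Irreducible (X ^ 2 - C ((p : F) * (1 + 4 * a)))) ∧
    -- (ii)
    (∀ (E : Type) (_ : Field E) (_ : Algebra F E) (e : E),
      e ^ 2 = algebraMap F E ((p : F) * (1 + 4 * a)) →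
      Algebra.adjoin F {e} = ⊤ →
      ((∃ w : Valuation E (WithZero (Multiplicative ℤ)),
          Function.Surjective w ∧ (w.comap (algebraMap F E)).IsEquiv Valued.v) ∧
        ∀ w : Valuation E (WithZero (Multiplicative ℤ)),
          Function.Surjective w → (w.comap (algebraMap F E)).IsEquiv Valued.v →
          ((∀ y : E, w y ≤ 1 →
              ∃ x : F, Valued.v x ≤ 1 ∧ w (y - algebraMap F E x) < 1) ∧
            ∃ γ : WithZero (Multiplicative ℤ), w ((p : ℕ) : E) = γ ^ 2))) ∧
    -- (iii)
    (∀ (E : Type) (_ : Field E) (_ : Algebra F E) (e : E),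
      e ^ 2 = algebraMap F E ((p : F) * (1 + 4 * a)) →
      Algebra.adjoin F {e} = ⊤ →
      ∀ (E' : Type) (_ : Field E') (_ : Algebra E E') (_ : Algebra F E')
        (_ : IsScalarTower F E E') (e' : E'),
        e' ^ 2 = algebraMap F E' (p : F) →
        Algebra.adjoin E {e'} = ⊤ →
        ∀ w' : Valuation E' (WithZero (Multiplicative ℤ)),
          (w'.comap (algebraMap F E')).IsEquiv Valued.v →
          ∃ β : E', w' β ≤ 1 ∧ w' (β ^ 2 - β - algebraMap F E' a) < 1 ∧
            ∀ y : E', w' y ≤ 1 →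
              ∃ x₁ x₂ : F, Valued.v x₁ ≤ 1 ∧ Valued.v x₂ ≤ 1 ∧
                w' (y - (algebraMap F E' x₁ + algebraMap F E' x₂ * β)) < 1) := by
  classical
  set v : Valuation F Zm0 := Valued.v with hvdef
  have hvp : v (p : F) = ee (-1) := hunif
  set R := v.valuationSubring with hRdef
  set abar := IsLocalRing.residue R (⟨a, ha⟩ : R) with habar
  -- no root of X²-X-ā in the residue field
  have Kroot : ∀ r : IsLocalRing.ResidueField R, r ^ 2 - r - abar = 0 → False := by
    intro r hr
    have hdvd : X - C r ∣ (X ^ 2 - X - C abar) :=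
      dvd_iff_isRoot.2 (by simp only [IsRoot.def, eval_sub, eval_pow, eval_X, eval_C]; exact hr)
    obtain ⟨g, hg⟩ := hdvd
    rcases hirr.isUnit_or_isUnit hg with h1 | h2
    · exact not_isUnit_X_sub_C r h1
    · have hdeg : (X ^ 2 - X - C abar).natDegree = 2 := by compute_degree!
      have hg0 : g ≠ 0 := h2.ne_zero
      have hd1 : ((X - C r) * g).natDegree = 1 := by
        rw [natDegree_mul (X_sub_C_ne_zero r) hg0, natDegree_X_sub_C,
          Polynomial.natDegree_eq_zero_of_isUnit h2]
      rw [← hg, hdeg] at hd1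
      omega
  -- no lift of a root either
  have vroot : ∀ x : F, v x ≤ 1 → v (x ^ 2 - x - a) < 1 → False := by
    intro x hx h1
    have hmem : x ^ 2 - x - a ∈ R := (Valuation.mem_valuationSubring_iff _ _).2 h1.le
    have hco : ((((⟨x, hx⟩ : R) ^ 2 - ⟨x, hx⟩ - ⟨a, ha⟩ : R)) : F) = x ^ 2 - x - a := by
      push_cast; ring
    have hres : IsLocalRing.residue R ((⟨x, hx⟩ : R) ^ 2 - ⟨x, hx⟩ - ⟨a, ha⟩) = 0 := by
      rw [residue_zero_iff]
      rw [hco]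
      exact h1
    apply Kroot (IsLocalRing.residue R ⟨x, hx⟩)
    rw [← map_pow, ← map_sub, ← map_sub]
    exact hres
  have hvnat : ∀ n : ℕ, v (n : F) ≤ 1 := val_natCast_le_one v
  have hva : v a ≤ 1 := ha
  have hu_le : v (1 + 4 * a) ≤ 1 := by
    refine le_trans (v.map_add _ _) (max_le (le_of_eq v.map_one) ?_)
    rw [v.map_mul]
    calc v (4 : F) * v a ≤ 1 * 1 := mul_le_mul' (by exact_mod_cast hvnat 4) hva
      _ = 1 := mul_one 1
  have hu1 : v (1 + 4 * a) = 1 := by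
    rcases lt_or_eq_of_le hu_le with hlt | heq
    · exfalso
      have hmem : (1 + 4 * a) ∈ R := (Valuation.mem_valuationSubring_iff _ _).2 hu_le
      have hco : (((1 + ((4:ℕ):R) * (⟨a, ha⟩ : R)) : R) : F) = 1 + 4 * a := by
        push_cast; norm_cast
      have hres : IsLocalRing.residue R (1 + ((4:ℕ):R) * (⟨a, ha⟩ : R)) = 0 := by
        rw [residue_zero_iff, hco]; exact hlt
      have hK : (1 : IsLocalRing.ResidueField R) + 4 * abar = 0 := by
        have h' := hres
        rw [map_add, map_mul, map_natCast, map_one] at h'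
        rw [habar]
        exact_mod_cast h'
      by_cases h2 : (2 : IsLocalRing.ResidueField R) = 0
      · have h4 : (4 : IsLocalRing.ResidueField R) = 0 := by
          have : (4 : IsLocalRing.ResidueField R) = 2 * 2 := by norm_num
          rw [this, h2, mul_zero]
        rw [h4, zero_mul, add_zero] at hK
        exact one_ne_zero hK
      · have h4 : (4 : IsLocalRing.ResidueField R) ≠ 0 := by
          have : (4 : IsLocalRing.ResidueField R) = 2 * 2 := by norm_num
          rw [this]; exact mul_ne_zero h2 h2
        apply Kroot ((2 : IsLocalRing.ResidueField R)⁻¹)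
        field_simp
        linear_combination -hK
    · exact heq
  have hvc : v ((p : F) * (1 + 4 * a)) = ee (-1) := by
    rw [v.map_mul, hvp, hu1, mul_one]
  have hns : ∀ q : F, q ^ 2 ≠ (p : F) * (1 + 4 * a) := by
    intro q hq
    have h1 := congrArg v hq
    rw [v.map_pow, hvc] at h1
    have hq0 : v q ≠ 0 := by
      intro h0
      rw [h0, zero_pow (by norm_num : (2:ℕ) ≠ 0)] at h1
      exact ee_ne_zero _ h1.symm
    obtain ⟨m, hm⟩ := exists_ee hq0
    rw [hm, ee_pow, ee_inj] at h1
    omega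
  refine ⟨⟨hu1, X_pow_sub_C_irreducible_of_prime Nat.prime_two hns⟩, ?_, ?_⟩
  · -- part (ii)
    intro E _ _ e hce htop
    obtain ⟨cF, hcF⟩ : ∃ cc : F, cc = (p : F) * (1 + 4 * a) := ⟨_, rfl⟩
    rw [← hcF] at hvc hns hce
    have hC := fun z => span_pair hce htop z
    choose cx cy hco using hC
    have hun : ∀ (z : E) (x y : F),
        z = algebraMap F E x + algebraMap F E y * e → cx z = x ∧ cy z = y := by
      intro z x y h
      exact coords_unique hns hce ((hco z).symm.trans h)
    have KF : ∀ x y : F, v (x ^ 2 - cF * y ^ 2) = max ((v x) ^ 2) (ee (-1) * (v y) ^ 2) := by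
      intro x y
      have hx2 : v (x ^ 2) = (v x) ^ 2 := v.map_pow x 2
      have hy2 : v (-(cF * y ^ 2)) = ee (-1) * (v y) ^ 2 := by
        rw [v.map_neg, v.map_mul, hvc, v.map_pow]
      rw [sub_eq_add_neg, val_add_parity v (le_refl (1:ℤ)) (j := 1) ?_ ?_, hx2, hy2]
      · by_cases hx : x = 0
        · left; rw [hx]; norm_num
        · right
          obtain ⟨m, hm⟩ := exists_ee ((Valuation.ne_zero_iff v).2 hx)
          exact ⟨m, by rw [hx2, hm, ee_pow]; congr 1; ring⟩
      · by_cases hy : y = 0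
        · left; rw [hy]; norm_num
        · right
          obtain ⟨m, hm⟩ := exists_ee ((Valuation.ne_zero_iff v).2 hy)
          refine ⟨m - 1, by rw [hy2, hm, ee_pow, ee_mul]; congr 1; ring⟩
    have hf0 : cx 0 = 0 ∧ cy 0 = 0 := hun 0 0 0 (by simp)
    have hf1 : cx 1 = 1 ∧ cy 1 = 0 := hun 1 1 0 (by simp)
    have hprod : ∀ z z' : E, cx (z * z') = cx z * cx z' + cF * (cy z * cy z') ∧
        cy (z * z') = cx z * cy z' + cy z * cx z' := by
      intro z z'
      apply hun
      conv_lhs => rw [hco z, hco z']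
      simp only [map_add, map_mul]
      linear_combination (algebraMap F E (cy z) * algebraMap F E (cy z')) * hce
    have hsum : ∀ z z' : E, cx (z + z') = cx z + cx z' ∧ cy (z + z') = cy z + cy z' := by
      intro z z'
      apply hun
      conv_lhs => rw [hco z, hco z']
      rw [map_add, map_add]
      ring
    let w : Valuation E Zm0 :=
      { toFun := fun z => v ((cx z) ^ 2 - cF * (cy z) ^ 2)
        map_zero' := by rw [hf0.1, hf0.2]; simp
        map_one' := by rw [hf1.1, hf1.2]; simp
        map_mul' := by
          intro z z'
          rw [(hprod z z').1, (hprod z z').2, ← v.map_mul]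
          congr 1
          ring
        map_add_le_max' := by
          intro z z'
          rw [(hsum z z').1, (hsum z z').2, KF, KF, KF]
          calc max ((v (cx z + cx z')) ^ 2) (ee (-1) * (v (cy z + cy z')) ^ 2)
              ≤ max ((max (v (cx z)) (v (cx z'))) ^ 2)
                  (ee (-1) * (max (v (cy z)) (v (cy z'))) ^ 2) :=
                max_le_max (sq_le_sq_iff.2 (v.map_add _ _))
                  (mul_le_mul' le_rfl (sq_le_sq_iff.2 (v.map_add _ _)))
            _ = max (max ((v (cx z)) ^ 2) ((v (cx z')) ^ 2))
                  (max (ee (-1) * (v (cy z)) ^ 2) (ee (-1) * (v (cy z')) ^ 2)) := by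
                rw [max_sq, max_sq, mul_max₀]
            _ = max (max ((v (cx z)) ^ 2) (ee (-1) * (v (cy z)) ^ 2))
                  (max ((v (cx z')) ^ 2) (ee (-1) * (v (cy z')) ^ 2)) :=
                max_max_max_comm _ _ _ _ }
    have hwapp : ∀ z : E, w z = v ((cx z) ^ 2 - cF * (cy z) ^ 2) := fun z => rfl
    have hwφ : ∀ x : F, w (algebraMap F E x) = (v x) ^ 2 := by
      intro x
      have h := hun (algebraMap F E x) x 0 (by simp)
      rw [hwapp, h.1, h.2]
      rw [show x ^ 2 - cF * 0 ^ 2 = x ^ 2 by ring, v.map_pow]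
    have hwe : w e = ee (-1) := by
      have h := hun e 0 1 (by simp)
      rw [hwapp, h.1, h.2, show (0:F) ^ 2 - cF * 1 ^ 2 = -cF by ring, v.map_neg, hvc]
    have hwsurj : Function.Surjective w := by
      intro γ
      rcases eq_or_ne γ 0 with rfl | hγ
      · exact ⟨0, w.map_zero⟩
      obtain ⟨n, rfl⟩ := exists_ee hγ
      rcases Int.even_or_odd n with ⟨m, hm⟩ | ⟨m, hm⟩
      · obtain ⟨x, hx⟩ := hsurj (ee m)
        exact ⟨algebraMap F E x, by rw [hwφ, hx, ee_pow]; congr 1; omega⟩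
      · obtain ⟨x, hx⟩ := hsurj (ee (m + 1))
        refine ⟨algebraMap F E x * e, ?_⟩
        rw [w.map_mul, hwφ, hwe, hx, ee_pow, ee_mul]
        congr 1; omega
    have hweqv : (w.comap (algebraMap F E)).IsEquiv v := by
      intro r s
      rw [Valuation.comap_apply, Valuation.comap_apply, hwφ, hwφ]
      exact sq_le_sq_iff
    refine ⟨⟨w, hwsurj, hweqv⟩, ?_⟩
    clear hwapp hwφ hwe hwsurj hweqv
    intro w hws hweq
    obtain ⟨k, hk1, hk⟩ := isEquiv_pow hweq hvp
    have hkφ : ∀ x m, v x = ee m → w (algebraMap F E x) = ee (k * m) := fun x m h => by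
      have := hk x m h; rwa [Valuation.comap_apply] at this
    have hcF0 : cF ≠ 0 := by
      intro h; rw [h, v.map_zero] at hvc; exact (ee_ne_zero _) hvc.symm
    have he0 : e ≠ 0 := by
      intro h
      rw [h] at hce
      apply hcF0
      have h0 : algebraMap F E cF = 0 := by rw [← hce]; norm_num
      exact (_root_.map_eq_zero (algebraMap F E)).1 h0
    have hwe0 : w e ≠ 0 := (Valuation.ne_zero_iff w).2 he0
    obtain ⟨me, hme⟩ := exists_ee hwe0
    have h1 : w (e ^ 2) = ee (k * -1) := by rw [hce]; exact hkφ _ _ hvc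
    rw [w.map_pow, hme, ee_pow] at h1
    have h2me : 2 * me = k * -1 := ee_inj.1 h1
    have hj : (1:ℤ) ≤ -me := by omega
    have hks : k = 2 * (-me) := by omega
    have hvalx : ∀ x : F, x ≠ 0 → ∃ m, w (algebraMap F E x) = ee ((-me) * (2 * m)) := by
      intro x hx
      obtain ⟨m, hm⟩ := exists_ee ((Valuation.ne_zero_iff v).2 hx)
      exact ⟨m, by rw [hkφ x m hm, hks]; congr 1; ring⟩
    have hvaly : ∀ y : F, y ≠ 0 → ∃ m, w (algebraMap F E y * e) = ee ((-me) * (2 * m + 1)) := by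
      intro y hy
      obtain ⟨m, hm⟩ := exists_ee ((Valuation.ne_zero_iff v).2 hy)
      exact ⟨m - 1, by rw [w.map_mul, hkφ y m hm, hme, ee_mul, hks]; congr 1; ring⟩
    have hgrade : ∀ x y : F, w (algebraMap F E x + algebraMap F E y * e) =
        max (w (algebraMap F E x)) (w (algebraMap F E y * e)) := by
      intro x y
      apply val_add_parity w hj
      · by_cases hx : x = 0
        · left; rw [hx, map_zero]
        · exact Or.inr (hvalx x hx)
      · by_cases hy : y = 0
        · left; rw [hy, map_zero, zero_mul]
        · exact Or.inr (hvaly y hy)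
    have hme1 : -me = 1 := by
      obtain ⟨z, hz⟩ := hws (ee (-1))
      obtain ⟨x, y, hzxy⟩ := span_pair hce htop z
      rw [hzxy, hgrade] at hz
      rcases max_cases (w (algebraMap F E x)) (w (algebraMap F E y * e)) with
        ⟨hmax, _⟩ | ⟨hmax, _⟩ <;> rw [hmax] at hz
      · by_cases hx : x = 0
        · rw [hx, map_zero, w.map_zero] at hz; exact absurd hz.symm (ee_ne_zero _)
        obtain ⟨m, hm⟩ := hvalx x hx
        rw [hm, ee_inj] at hz
        exfalso
        have heven : Even ((-me) * (2 * m)) := ⟨-me * m, by ring⟩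
        rw [hz] at heven
        norm_num at heven
      · by_cases hy : y = 0
        · rw [hy, map_zero, zero_mul, w.map_zero] at hz; exact absurd hz.symm (ee_ne_zero _)
        obtain ⟨m, hm⟩ := hvaly y hy
        rw [hm, ee_inj] at hz
        have hdvd : (-me) ∣ 1 := (dvd_neg.1 ⟨2 * m + 1, hz.symm⟩)
        rcases Int.isUnit_iff.1 (isUnit_of_dvd_one hdvd) with h | h
        · exact h
        · omega
    constructor
    · intro y hy
      obtain ⟨x, x', hxy⟩ := span_pair hce htop y
      have hyval : w y = max (w (algebraMap F E x)) (w (algebraMap F E x' * e)) := by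
        rw [hxy]; exact hgrade x x'
      have h1' : w (algebraMap F E x) ≤ 1 := le_trans (le_max_left _ _) (hyval ▸ hy)
      have h2' : w (algebraMap F E x' * e) ≤ 1 := le_trans (le_max_right _ _) (hyval ▸ hy)
      refine ⟨x, (isEquiv_le_one_iff hweq x).1 (by rwa [Valuation.comap_apply]), ?_⟩
      have hrest : y - algebraMap F E x = algebraMap F E x' * e := by rw [hxy]; ring
      rw [hrest]
      by_cases hx' : x' = 0
      · rw [hx', map_zero, zero_mul, map_zero]; exact zero_lt_one
      · obtain ⟨m, hm⟩ := hvaly x' hx'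
        rw [hm] at h2' ⊢
        rw [hme1] at h2' ⊢
        rw [ee_le_one] at h2'
        rw [ee_lt_one]
        omega
    · refine ⟨ee (-1), ?_⟩
      have hcast : ((p:ℕ) : E) = algebraMap F E ((p:ℕ) : F) := (map_natCast _ p).symm
      rw [hcast, hkφ _ (-1) hvp, ee_pow, ee_inj]
      push_cast
      omega
  · -- part (iii)
    intro E _instE _algE e hce htop E' _instE' _algEE' _algFE' _tower e' he'sq htop' w' hw'eq
    obtain ⟨k, hk1, hk⟩ := isEquiv_pow hw'eq hvp
    have hkφ : ∀ x m, v x = ee m → w' (algebraMap F E' x) = ee (k * m) := fun x m h => by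
      have := hk x m h; rwa [Valuation.comap_apply] at this
    have hwle1 : ∀ x : F, v x ≤ 1 → w' (algebraMap F E' x) ≤ 1 := fun x h => by
      have := (isEquiv_le_one_iff hw'eq x).2 h; rwa [Valuation.comap_apply] at this
    have hle1w : ∀ x : F, w' (algebraMap F E' x) ≤ 1 → v x ≤ 1 := fun x h =>
      (isEquiv_le_one_iff hw'eq x).1 (by rwa [Valuation.comap_apply])
    have hwlt1 : ∀ x : F, w' (algebraMap F E' x) < 1 → v x < 1 := fun x h =>
      (isEquiv_lt_one_iff hw'eq x).1 (by rwa [Valuation.comap_apply])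
    have hp0 : (p : F) ≠ 0 := Nat.cast_ne_zero.2 hp.pos.ne'
    have hφ'p : algebraMap F E' (p : F) ≠ 0 := by
      simp only [ne_eq, _root_.map_eq_zero]; exact hp0
    have he'0 : e' ≠ 0 := by
      intro h; apply hφ'p; rw [← he'sq, h]; norm_num
    have hw'e0 : w' e' ≠ 0 := (Valuation.ne_zero_iff w').2 he'0
    obtain ⟨me, hme⟩ := exists_ee hw'e0
    have h1 : w' (e' ^ 2) = ee (k * -1) := by rw [he'sq]; exact hkφ _ _ hvp
    rw [w'.map_pow, hme, ee_pow] at h1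
    have h2me : (2 : ℤ) * me = k * -1 := by exact_mod_cast ee_inj.1 h1
    obtain ⟨j, hjdef⟩ : ∃ j : ℤ, j = -me := ⟨_, rfl⟩
    have hj1 : (1:ℤ) ≤ j := by omega
    have hkj : k = 2 * j := by omega
    have hme' : w' e' = ee (-j) := by rw [hme]; congr 1; omega
    have hebsq : (algebraMap E E' e) ^ 2 = algebraMap F E' ((p : F) * (1 + 4 * a)) := by
      rw [← map_pow, hce, ← IsScalarTower.algebraMap_apply]
    have heb0 : algebraMap E E' e ≠ 0 := by
      intro h
      have h0 : ((p : F) * (1 + 4 * a)) = 0 :=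
        (_root_.map_eq_zero (algebraMap F E')).1 (by rw [← hebsq, h]; norm_num)
      rw [h0, v.map_zero] at hvc
      exact ee_ne_zero _ hvc.symm
    obtain ⟨mb, hmb⟩ := exists_ee ((Valuation.ne_zero_iff w').2 heb0)
    have h1b : w' ((algebraMap E E' e) ^ 2) = ee (k * -1) := by rw [hebsq]; exact hkφ _ _ hvc
    rw [w'.map_pow, hmb, ee_pow] at h1b
    have h2mb : (2 : ℤ) * mb = k * -1 := by exact_mod_cast ee_inj.1 h1b
    have hmb' : w' (algebraMap E E' e) = ee (-j) := by rw [hmb]; congr 1; omega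
    obtain ⟨s, hsdef⟩ : ∃ s : E', s = algebraMap E E' e * e'⁻¹ := ⟨_, rfl⟩
    have hse : s * e' = algebraMap E E' e := by
      rw [hsdef]; field_simp
    have hs2 : s ^ 2 = algebraMap F E' (1 + 4 * a) := by
      have h4 : s ^ 2 * e' ^ 2 = (algebraMap E E' e) ^ 2 := by rw [← mul_pow, hse]
      rw [hebsq, he'sq, map_mul] at h4
      exact mul_right_cancel₀ hφ'p (by linear_combination h4)
    have hs2' : s ^ 2 = 1 + 4 * algebraMap F E' a := by
      rw [hs2, map_add, map_one, map_mul, map_ofNat]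
    have h2E' : (2 : E') ≠ 0 := by
      rw [show (2 : E') = algebraMap F E' 2 from (map_ofNat _ 2).symm]
      simp only [ne_eq, _root_.map_eq_zero]
      exact two_ne_zero
    obtain ⟨β, hβdef⟩ : ∃ b : E', b = (1 + s) / 2 := ⟨_, rfl⟩
    have hsβ : s = 2 * β - 1 := by rw [hβdef]; field_simp; ring
    have hβroot : β ^ 2 - β - algebraMap F E' a = 0 := by
      have h4 : (2:E')^2 * (β ^ 2 - β - algebraMap F E' a) = s^2 - 1 - 4 * algebraMap F E' a := by
        rw [hsβ]; ring
      rw [hs2'] at h4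
      have h5 : (2:E')^2 * (β ^ 2 - β - algebraMap F E' a) = 0 := by rw [h4]; ring
      rcases mul_eq_zero.1 h5 with h | h
      · exact absurd h (pow_ne_zero 2 h2E')
      · exact h
    have hβle : w' β ≤ 1 := by
      by_contra hgt
      push_neg at hgt
      have hβ0 : w' β ≠ 0 := by
        intro h0; rw [h0] at hgt; exact absurd hgt (by simp [zero_le'])
      obtain ⟨m, hm⟩ := exists_ee hβ0
      rw [hm] at hgt
      rw [show (1:Zm0) = ee 0 from rfl, ee_lt_ee] at hgt
      have hb2 : β ^ 2 = β + algebraMap F E' a := by linear_combination hβroot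
      have hv2 : w' (β ^ 2) = ee ((2:ℕ) * m) := by
        rw [w'.map_pow, hm, ee_pow]
      have hle : w' (β + algebraMap F E' a) ≤ ee m := by
        refine le_trans (w'.map_add _ _) (max_le (le_of_eq hm) ?_)
        refine le_trans (hwle1 a hva) ?_
        rw [show (1:Zm0) = ee 0 from rfl, ee_le_ee]; omega
      rw [← hb2, hv2, ee_le_ee] at hle
      omega
    refine ⟨β, hβle, ?_, ?_⟩
    · rw [hβroot, w'.map_zero]; exact zero_lt_one
    have hC : ∀ x x' : F, w' (algebraMap F E' x + algebraMap F E' x' * β)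
        = max (w' (algebraMap F E' x)) (w' (algebraMap F E' x')) := by
      have key : ∀ r : F, w' (algebraMap F E' r + β) = max (w' (algebraMap F E' r)) 1 := by
        intro r
        rcases le_or_gt (w' (algebraMap F E' r)) 1 with hr | hr
        · rw [max_eq_right hr]
          have hle : w' (algebraMap F E' r + β) ≤ 1 :=
            le_trans (w'.map_add _ _) (max_le hr hβle)
          rcases lt_or_eq_of_le hle with hlt | heq
          · exfalso
            have hid : (algebraMap F E' r + β) * (β - algebraMap F E' r - 1)
                = algebraMap F E' (a - (r ^ 2 + r)) := by
              rw [map_sub, map_add, map_pow]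
              linear_combination hβroot
            have hbound : w' (β - algebraMap F E' r - 1) ≤ 1 := by
              refine le_trans (w'.map_sub _ _)
                (max_le (le_trans (w'.map_sub _ _) (max_le hβle hr)) ?_)
              rw [w'.map_one]
            have hlow : w' (algebraMap F E' (a - (r ^ 2 + r))) < 1 := by
              rw [← hid, w'.map_mul]
              calc w' (algebraMap F E' r + β) * w' (β - algebraMap F E' r - 1)
                  ≤ w' (algebraMap F E' r + β) * 1 := mul_le_mul' le_rfl hbound
                _ = w' (algebraMap F E' r + β) := mul_one _
                _ < 1 := hlt
            have hvlt : v (a - (r ^ 2 + r)) < 1 := hwlt1 _ hlow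
            have hvr : v r ≤ 1 := hle1w r hr
            refine vroot (-r) (by rwa [v.map_neg]) ?_
            rw [show (-r) ^ 2 - (-r) - a = -(a - (r ^ 2 + r)) by ring, v.map_neg]
            exact hvlt
          · exact heq
        · rw [max_eq_left hr.le]
          exact (Valuation.map_add_of_distinct_val w'
            (ne_of_gt (lt_of_le_of_lt hβle hr))).trans (max_eq_left (hβle.trans hr.le))
      intro x x'
      by_cases hx' : x' = 0
      · rw [hx', map_zero, zero_mul, add_zero, w'.map_zero, max_eq_left zero_le']
      · have hfac : algebraMap F E' x + algebraMap F E' x' * β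
            = algebraMap F E' x' * (algebraMap F E' (x / x') + β) := by
          rw [mul_add, ← map_mul, mul_comm x' (x / x'), div_mul_cancel₀ x hx']
        have hxsplit : w' (algebraMap F E' x)
            = w' (algebraMap F E' x') * w' (algebraMap F E' (x / x')) := by
          rw [← w'.map_mul, ← map_mul, mul_comm x' (x / x'), div_mul_cancel₀ x hx']
        rw [hfac, w'.map_mul, key (x / x'), hxsplit, mul_max₀, mul_one]
    have hφval : ∀ x : F, x = 0 ∨ ∃ m, w' (algebraMap F E' x) = ee (j * (2 * m)) := by
      intro x
      by_cases hx : x = 0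
      · exact Or.inl hx
      · obtain ⟨m, hm⟩ := exists_ee ((Valuation.ne_zero_iff v).2 hx)
        exact Or.inr ⟨m, by rw [hkφ x m hm, hkj]; congr 1; ring⟩
    have hpair : ∀ x x' : F, (algebraMap F E' x + algebraMap F E' x' * β = 0)
        ∨ ∃ m, w' (algebraMap F E' x + algebraMap F E' x' * β) = ee (j * (2 * m)) := by
      intro x x'
      rcases hφval x with hx | ⟨m, hm⟩
      · rcases hφval x' with hx' | ⟨m', hm'⟩
        · left; rw [hx, hx', map_zero, zero_mul, add_zero]
        · right
          exact ⟨m', by rw [hC, hx, map_zero, w'.map_zero, max_eq_right zero_le', hm']⟩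
      · rcases hφval x' with hx' | ⟨m', hm'⟩
        · right
          exact ⟨m, by rw [hC, hx', map_zero, w'.map_zero, max_eq_left zero_le', hm]⟩
        · right
          rcases le_total m m' with hmm | hmm
          · refine ⟨m', ?_⟩
            rw [hC, hm, hm', max_eq_right]
            exact ee_le_ee.2 (mul_le_mul_of_nonneg_left (by omega) (by omega))
          · refine ⟨m, ?_⟩
            rw [hC, hm, hm', max_eq_left]
            exact ee_le_ee.2 (mul_le_mul_of_nonneg_left (by omega) (by omega))
    have hodd : ∀ x x' : F, ((algebraMap F E' x + algebraMap F E' x' * β) * e' = 0)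
        ∨ ∃ m, w' ((algebraMap F E' x + algebraMap F E' x' * β) * e') = ee (j * (2 * m + 1)) := by
      intro x x'
      rcases hpair x x' with h0 | ⟨m, hm⟩
      · left; rw [h0, zero_mul]
      · right
        refine ⟨m - 1, ?_⟩
        rw [w'.map_mul, hm, hme', ee_mul]
        congr 1; ring
    intro y hy
    have hce'' : e' ^ 2 = algebraMap E E' (algebraMap F E (p : F)) := by
      rw [he'sq, IsScalarTower.algebraMap_apply F E E']
    obtain ⟨A, B, hAB⟩ := span_pair hce'' htop' y
    obtain ⟨x0, x1, hA⟩ := span_pair hce htop A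
    obtain ⟨x2, x3, hB⟩ := span_pair hce htop B
    have htow : ∀ x : F, algebraMap E E' (algebraMap F E x) = algebraMap F E' x := fun x =>
      (IsScalarTower.algebraMap_apply F E E' x).symm
    have hy4 : y = algebraMap F E' x0 + algebraMap F E' x1 * algebraMap E E' e
        + (algebraMap F E' x2 + algebraMap F E' x3 * algebraMap E E' e) * e' := by
      rw [hAB, hA, hB, map_add, map_add, map_mul, map_mul, htow, htow, htow, htow]
    have hy5 : y = (algebraMap F E' (x0 - (p : F) * x3)
          + algebraMap F E' (2 * ((p : F) * x3)) * β)
        + ((algebraMap F E' (x2 - x1) + algebraMap F E' (2 * x1) * β) * e') := by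
      have he'sq2 : e' ^ 2 = ((p:ℕ) : E') := by rw [he'sq, map_natCast]
      rw [hy4, ← hse, hsβ]
      simp only [map_sub, map_mul, map_add, map_ofNat, map_natCast]
      linear_combination (algebraMap F E' x3 * (2 * β - 1)) * he'sq2
    have hgr : w' y = max
        (w' (algebraMap F E' (x0 - (p : F) * x3) + algebraMap F E' (2 * ((p : F) * x3)) * β))
        (w' ((algebraMap F E' (x2 - x1) + algebraMap F E' (2 * x1) * β) * e')) := by
      rw [hy5]
      exact val_add_parity w' hj1 (hpair _ _) (hodd _ _)
    have hA1 : w' (algebraMap F E' (x0 - (p : F) * x3)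
        + algebraMap F E' (2 * ((p : F) * x3)) * β) ≤ 1 :=
      le_trans (le_max_left _ _) (hgr ▸ hy)
    have hB1 : w' ((algebraMap F E' (x2 - x1) + algebraMap F E' (2 * x1) * β) * e') ≤ 1 :=
      le_trans (le_max_right _ _) (hgr ▸ hy)
    rw [hC] at hA1
    refine ⟨x0 - (p : F) * x3, 2 * ((p : F) * x3),
      hle1w _ (le_trans (le_max_left _ _) hA1),
      hle1w _ (le_trans (le_max_right _ _) hA1), ?_⟩
    have hrest : y - (algebraMap F E' (x0 - (p : F) * x3)
        + algebraMap F E' (2 * ((p : F) * x3)) * β)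
        = (algebraMap F E' (x2 - x1) + algebraMap F E' (2 * x1) * β) * e' := by
      rw [hy5]; ring
    rw [hrest]
    rcases hodd (x2 - x1) (2 * x1) with h0 | ⟨m, hm⟩
    · rw [h0, w'.map_zero]; exact zero_lt_one
    · rw [hm] at hB1 ⊢
      rw [show (1:Zm0) = ee 0 from rfl, ee_le_ee] at hB1
      rw [show (1:Zm0) = ee 0 from rfl, ee_lt_ee]
      have hne : j * (2 * m + 1) ≠ 0 := mul_ne_zero (by omega) (by omega)
      omega
end
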